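/- Let G be a finite simple graph on n vertices and let c be an integer with 4 ≤ c ≤ n − 4. If the set { e(S) : S ⊆ V(G), |S| = c } of sizes of induced subgraphs of order c has exactly two elements, then G or its complement is either a star K_{1,n−1} (one vertex adjacent to all other n−1 vertices and no other edges) or the disjoint union of a single edge and n − 2 isolated vertices. -/

import Mathlib

open Finset

/-- `e(S)`: the number of edges of the subgraph of `G` induced by the vertex set `S`. -/
def inducedSize {V : Type*} [Fintype V] [DecidableEq V] (G : SimpleGraph V)
    [DecidableRel G.Adj] (S : Finset V) : ℕ :=
  (G.edgeFinset.filter (· ∈ S.sym2)).card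

/-- `G` is a star `K_{1,n-1}`: one center vertex adjacent to all other vertices,
and no other edges. -/
def IsStarGraph {V : Type*} (G : SimpleGraph V) : Prop :=
  ∃ v : V, ∀ a b : V, G.Adj a b ↔ a ≠ b ∧ (a = v ∨ b = v)

/-- `G` is the disjoint union of a single edge and isolated vertices. -/
def IsSingleEdgeGraph {V : Type*} (G : SimpleGraph V) : Prop :=
  ∃ a b : V, a ≠ b ∧ ∀ x y : V, G.Adj x y ↔ (x = a ∧ y = b) ∨ (x = b ∧ y = a)

/-!
For distinct vertices `u, w` let `p` (resp. `q`) count the other vertices adjacent to `u` but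
not `w` (resp. to `w` but not `u`), and `z` those adjacent to both or neither. If a
`(c-1)`-set `T` avoiding `u, w` contains `i` vertices of the first kind and `j` of the second,
then `e(T + u) - e(T + w) = i - j`. So when the induced subgraphs of order `c` have exactly the
sizes `a < b`, every such realizable `i - j` lies in `{0, ±(b - a)}`, which pins down `p, q, z`.

If `b = a + 1`, then `p, q ≤ 1` for every pair; this forces `G` or `Gᶜ` to have maximum degree
at most one, and two disjoint edges would give `c`-sets inducing `e` and `e + 2` edges.
If `b ≥ a + 2`, every pair is a pair of twins or a dominating pair (one of them adjacent, the
other non-adjacent, to every third vertex). If all pairs were twins, `G` would be empty or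
complete and induce a single size; a dominating pair forces `G` or `Gᶜ` to be a star.
-/

-- `(i, j)` is realizable when a `k`-set can take exactly `i` elements of a `p`-set and `j` of a
-- disjoint `q`-set, the remaining ones coming from a third disjoint set of size `z`.
def Realizable (k p q z i j : ℕ) : Prop :=
  i ≤ p ∧ j ≤ q ∧ i + j ≤ k ∧ k ≤ i + j + z

theorem Realizable.swap {k p q z i j : ℕ} (h : Realizable k p q z i j) :
    Realizable k q p z j i := by
  obtain ⟨hi, hj, h1, h2⟩ := h
  exact ⟨hj, hi, by omega, by omega⟩

theorem le_one_of_forall_realizable {k p q z : ℕ} (hk : 3 ≤ k) (hsum : k + 3 ≤ p + q + z)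
    (h : ∀ i j, Realizable k p q z i j → i ≤ j + 1 ∧ j ≤ i + 1) : p ≤ 1 := by
  by_contra! hp
  by_cases hz : k ≤ min p k + z
  · have := h (min p k) 0 ⟨min_le_left _ _, by omega, by omega, by omega⟩
    omega
  · have h1 := h p (k - z - p) ⟨le_rfl, by omega, by omega, by omega⟩
    have h2 := h (p - 2) (k - z - p + 2) ⟨by omega, by omega, by omega, by omega⟩
    omega

theorem eq_zero_or_eq_zero_of_forall_realizable {k p q z d : ℕ} (hk : 3 ≤ k) (hd : 2 ≤ d)
    (hsum : k + 3 ≤ p + q + z)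
    (h : ∀ i j, Realizable k p q z i j → i = j ∨ i = j + d ∨ j = i + d) :
    p = 0 ∨ z = 0 := by
  by_contra! ⟨hp, hz⟩
  by_cases hbig : k + 1 ≤ min p k + z
  · have h1 := h (min p k) 0 ⟨min_le_left _ _, by omega, by omega, by omega⟩
    have h2 := h (min p k - 1) 0 ⟨by omega, by omega, by omega, by omega⟩
    omega
  · have h1 := h p (k - z - p + 1) ⟨le_rfl, by omega, by omega, by omega⟩
    have h2 := h (p - 1) (k - z - p + 1) ⟨by omega, by omega, by omega, by omega⟩
    omega

theorem two_eq_zero_of_forall_realizable {k p q z d : ℕ} (hk : 3 ≤ k) (hd : 2 ≤ d)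
    (hsum : k + 3 ≤ p + q + z)
    (h : ∀ i j, Realizable k p q z i j → i = j ∨ i = j + d ∨ j = i + d) :
    (p = 0 ∧ q = 0) ∨ (q = 0 ∧ z = 0) ∨ (p = 0 ∧ z = 0) := by
  have h' : ∀ i j, Realizable k q p z i j → i = j ∨ i = j + d ∨ j = i + d := fun i j hij => by
    have := h j i hij.swap
    omega
  have hp := eq_zero_or_eq_zero_of_forall_realizable hk hd hsum h
  have hq := eq_zero_or_eq_zero_of_forall_realizable hk hd (by omega) h'
  by_contra! hpq
  have hz : z = 0 := by omega
  subst hz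
  by_cases hkp : k ≤ p
  · have h1 := h k 0 ⟨hkp, by omega, by omega, by omega⟩
    have h2 := h (k - 1) 1 ⟨by omega, by omega, by omega, by omega⟩
    omega
  by_cases hkq : k ≤ q
  · have h1 := h 0 k ⟨by omega, hkq, by omega, by omega⟩
    have h2 := h 1 (k - 1) ⟨by omega, by omega, by omega, by omega⟩
    omega
  have h0 := h (k - q) q ⟨by omega, le_rfl, by omega, by omega⟩
  have h1 := h (k - q + 1) (q - 1) ⟨by omega, by omega, by omega, by omega⟩
  have h2 := h (k - q + 2) (q - 2) ⟨by omega, by omega, by omega, by omega⟩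
  have h3 := h (k - q + 3) (q - 3) ⟨by omega, by omega, by omega, by omega⟩
  omega

theorem Finset.exists_subset_card_inter_eq {α : Type*} [DecidableEq α] {P Q Z : Finset α}
    (hPQ : Disjoint P Q) (hPZ : Disjoint P Z) (hQZ : Disjoint Q Z) {k i j : ℕ}
    (h : Realizable k #P #Q #Z i j) :
    ∃ T ⊆ P ∪ Q ∪ Z, #T = k ∧ #(T ∩ P) = i ∧ #(T ∩ Q) = j := by
  obtain ⟨hi, hj, hij, hk⟩ := h
  obtain ⟨P', hP', rfl⟩ := exists_subset_card_eq hi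
  obtain ⟨Q', hQ', rfl⟩ := exists_subset_card_eq hj
  obtain ⟨Z', hZ', hZ'card⟩ := exists_subset_card_eq (show k - #P' - #Q' ≤ #Z by omega)
  have hP'Q' : Disjoint P' Q' := hPQ.mono hP' hQ'
  have hP'Z' : Disjoint P' Z' := hPZ.mono hP' hZ'
  have hQ'Z' : Disjoint Q' Z' := hQZ.mono hQ' hZ'
  refine ⟨P' ∪ Q' ∪ Z', union_subset_union (union_subset_union hP' hQ') hZ', ?_, ?_, ?_⟩
  · rw [card_union_of_disjoint (disjoint_union_left.mpr ⟨hP'Z', hQ'Z'⟩),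
      card_union_of_disjoint hP'Q', hZ'card]
    omega
  · rw [union_inter_distrib_right, union_inter_distrib_right, inter_eq_left.mpr hP',
      disjoint_iff_inter_eq_empty.mp (hPQ.symm.mono_left hQ'),
      disjoint_iff_inter_eq_empty.mp (hPZ.symm.mono_left hZ'), union_empty, union_empty]
  · rw [union_inter_distrib_right, union_inter_distrib_right, inter_eq_left.mpr hQ',
      disjoint_iff_inter_eq_empty.mp (hPQ.mono_left hP'),
      disjoint_iff_inter_eq_empty.mp (hQZ.symm.mono_left hZ'), empty_union, union_empty]

namespace SimpleGraph

section

variable {V : Type*} {G : SimpleGraph V}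

def AreTwins (G : SimpleGraph V) (u w : V) : Prop :=
  ∀ x, x ≠ u → x ≠ w → (G.Adj u x ↔ G.Adj w x)

def Dominates (G : SimpleGraph V) (u w : V) : Prop :=
  ∀ x, x ≠ u → x ≠ w → G.Adj u x ∧ ¬G.Adj w x

theorem areTwins_compl {u w : V} : AreTwins Gᶜ u w ↔ AreTwins G u w :=
  forall_congr' fun x => imp_congr_right fun hxu => imp_congr_right fun hxw => by
    simp [compl_adj, hxu.symm, hxw.symm, not_iff_not]

theorem dominates_compl {u w : V} : Dominates Gᶜ u w ↔ Dominates G w u :=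
  forall_congr' fun x => by
    simp only [compl_adj, ne_eq, not_and, not_not]
    grind

theorem isStarGraph_of_dominates
    (hcl : ∀ u w : V, u ≠ w → AreTwins G u w ∨ Dominates G u w ∨ Dominates G w u) {u v : V}
    (hd : Dominates G u v) (huv : G.Adj u v) : IsStarGraph G := by
  have htwin : ∀ w, w ≠ u → w ≠ v → AreTwins G v w := fun w hwu hwv => by
    rcases hcl v w hwv.symm with h | h | h
    · exact h
    · exact absurd (hd w hwu hwv).1.symm (h u huv.ne hwu.symm).2
    · exact absurd huv.symm (h u hwu.symm huv.ne).2
  have hv : ∀ x, x ≠ u → ¬G.Adj v x := fun x hxu h => by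
    rcases eq_or_ne x v with rfl | hxv
    · exact G.irrefl h
    · exact (hd x hxu hxv).2 h
  have hu : ∀ x, x ≠ u → G.Adj u x := fun x hxu => by
    rcases eq_or_ne x v with rfl | hxv
    · exact huv
    · exact (hd x hxu hxv).1
  refine ⟨u, fun a b => ⟨fun hab => ⟨hab.ne, ?_⟩, ?_⟩⟩
  · by_contra! h
    rcases eq_or_ne a v with rfl | hav
    · exact hv b h.2 hab
    rcases eq_or_ne b v with rfl | hbv
    · exact hv a h.1 hab.symm
    exact hv b h.2 ((htwin a h.1 hav b hbv hab.ne').mpr hab)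
  · rintro ⟨hab, rfl | rfl⟩
    exacts [hu b hab.symm, (hu a hab).symm]

theorem eq_bot_or_compl_eq_bot (h : ∀ u w : V, u ≠ w → AreTwins G u w) : G = ⊥ ∨ Gᶜ = ⊥ := by
  by_cases hedge : ∃ u w, G.Adj u w
  · obtain ⟨u, w, huw⟩ := hedge
    have key : ∀ x y z, y ≠ x → z ≠ x → y ≠ z → (G.Adj x y ↔ G.Adj x z) :=
      fun x y z hyx hzx hyz => by
        rw [G.adj_comm x y, G.adj_comm x z]
        exact h y z hyz x hyx.symm hzx.symm
    have hu : ∀ y, y ≠ u → G.Adj u y := fun y hyu => by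
      rcases eq_or_ne y w with rfl | hyw
      · exact huw
      · exact (key u w y huw.ne' hyu hyw.symm).mp huw
    refine Or.inr (eq_bot_iff_forall_not_adj.mpr fun x y hxy => ?_)
    rw [compl_adj] at hxy
    refine hxy.2 ?_
    rcases eq_or_ne x u with rfl | hxu
    · exact hu y hxy.1.symm
    rcases eq_or_ne y u with rfl | hyu
    · exact (hu x hxu).symm
    exact (key x u y hxu.symm hxy.1.symm hyu.symm).mp (hu x hxu).symm
  · exact Or.inl (eq_bot_iff_forall_not_adj.mpr fun x y hxy => hedge ⟨x, y, hxy⟩)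

end

variable {V : Type*} [Fintype V] {G : SimpleGraph V} [DecidableRel G.Adj]

theorem eq_of_adj_of_adj {v x y : V} (hdeg : G.degree v ≤ 1) (hx : G.Adj v x)
    (hy : G.Adj v y) : x = y :=
  card_le_one.mp hdeg x ((mem_neighborFinset _ _ _).mpr hx) y ((mem_neighborFinset _ _ _).mpr hy)

variable [DecidableEq V]

theorem inducedSize_insert {u : V} {S : Finset V} (hu : u ∉ S) :
    inducedSize G (insert u S) = inducedSize G S + #{x ∈ S | G.Adj u x} := by
  have hsplit : G.edgeFinset.filter (· ∈ (insert u S).sym2) =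
      G.edgeFinset.filter (· ∈ S.sym2) ∪ {x ∈ S | G.Adj u x}.image (s(u, ·)) := by
    ext ⟨x, y⟩
    simp only [mem_filter, mem_edgeFinset, mem_edgeSet, mk_mem_sym2_iff, mem_insert,
      mem_union, mem_image, Sym2.eq_iff]
    constructor
    · rintro ⟨h, rfl | hx, rfl | hy⟩
      · exact (G.irrefl h).elim
      · exact Or.inr ⟨y, ⟨hy, h⟩, Or.inl ⟨rfl, rfl⟩⟩
      · exact Or.inr ⟨x, ⟨hx, h.symm⟩, Or.inr ⟨rfl, rfl⟩⟩
      · exact Or.inl ⟨h, hx, hy⟩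
    · rintro (⟨h, hx, hy⟩ | ⟨z, ⟨hz, h⟩, ⟨rfl, rfl⟩ | ⟨rfl, rfl⟩⟩)
      · exact ⟨h, Or.inr hx, Or.inr hy⟩
      · exact ⟨h, Or.inl rfl, Or.inr hz⟩
      · exact ⟨h.symm, Or.inr hz, Or.inl rfl⟩
  have hdisj : Disjoint (G.edgeFinset.filter (· ∈ S.sym2))
      ({x ∈ S | G.Adj u x}.image (s(u, ·))) := by
    simp only [disjoint_right, mem_image, mem_filter, not_and]
    rintro _ ⟨x, -, rfl⟩ - h
    exact hu (mk_mem_sym2_iff.mp h).1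
  rw [inducedSize, hsplit, card_union_of_disjoint hdisj, inducedSize]
  exact congrArg _ (card_image_of_injective _ (Sym2.mkEmbedding u).injective)

theorem inducedSize_add_inducedSize_compl (S : Finset V) :
    inducedSize G S + inducedSize Gᶜ S = (#S).choose 2 := by
  have hdisj : Disjoint G.edgeFinset Gᶜ.edgeFinset :=
    disjoint_edgeFinset.mpr disjoint_compl_right
  have hunion : G.edgeFinset.filter (· ∈ S.sym2) ∪ Gᶜ.edgeFinset.filter (· ∈ S.sym2) =
      {e ∈ S.sym2 | ¬ e.IsDiag} := by
    ext ⟨x, y⟩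
    by_cases h : G.Adj x y <;> by_cases hxy : x = y <;> simp [h, hxy, and_comm]
  rw [inducedSize, inducedSize, ← card_union_of_disjoint (hdisj.mono (filter_subset _ _)
    (filter_subset _ _)), hunion, sym2_eq_image, Sym2.filter_image_mk_not_isDiag,
    Sym2.card_image_offDiag]

theorem inducedSize_eq_zero_of_eq_bot (h : G = ⊥) (S : Finset V) : inducedSize G S = 0 := by
  rw [inducedSize, edgeFinset_eq_empty.mpr h, filter_empty, card_empty]

theorem exists_adj_of_inducedSize_pos {S : Finset V} (h : 0 < inducedSize G S) :
    ∃ x y, G.Adj x y := by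
  obtain ⟨e, he⟩ := card_pos.mp h
  induction e using Sym2.ind with
  | _ x y => exact ⟨x, y, by simpa using (mem_filter.mp he).1⟩

def exclusiveNeighbors (G : SimpleGraph V) [DecidableRel G.Adj] (u w : V) : Finset V :=
  {x | x ≠ w ∧ G.Adj u x ∧ ¬G.Adj w x}

def nonDistinguishing (G : SimpleGraph V) [DecidableRel G.Adj] (u w : V) : Finset V :=
  {x | x ≠ u ∧ x ≠ w ∧ (G.Adj u x ↔ G.Adj w x)}

theorem exclusiveNeighbors_compl (u w : V) :
    exclusiveNeighbors Gᶜ u w = exclusiveNeighbors G w u := by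
  ext x
  by_cases hx : x = w
  · simp [exclusiveNeighbors, hx]
  · simp only [exclusiveNeighbors, mem_filter, mem_univ, true_and, compl_adj]
    tauto

theorem card_exclusiveNeighbors_add_card_nonDistinguishing {u w : V} (huw : u ≠ w) :
    #(exclusiveNeighbors G u w) + #(exclusiveNeighbors G w u) + #(nonDistinguishing G u w) + 2 =
      Fintype.card V := by
  have hpair : #({x | x ≠ u ∧ x ≠ w} : Finset V) + 2 = Fintype.card V := by
    have hcompl : ({x | x ≠ u ∧ x ≠ w} : Finset V) = {u, w}ᶜ := by ext; simp
    have := card_le_univ ({u, w} : Finset V)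
    rw [hcompl, card_compl, card_pair huw]
    rw [card_pair huw] at this
    omega
  rw [← hpair, exclusiveNeighbors, exclusiveNeighbors, nonDistinguishing, card_filter, card_filter,
    card_filter, card_filter, ← sum_add_distrib, ← sum_add_distrib]
  congr 1
  refine sum_congr rfl fun x _ => ?_
  by_cases hxu : x = u
  · subst hxu; simp [huw]
  by_cases hxw : x = w
  · subst hxw; simp [hxu]
  by_cases G.Adj u x <;> by_cases G.Adj w x <;> simp_all

theorem card_filter_adj_add_card_inter_exclusiveNeighbors {u w : V} {T : Finset V}
    (hu : u ∉ T) (hw : w ∉ T) :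
    #{x ∈ T | G.Adj u x} + #(T ∩ exclusiveNeighbors G w u) =
      #{x ∈ T | G.Adj w x} + #(T ∩ exclusiveNeighbors G u w) := by
  simp only [exclusiveNeighbors, ← filter_mem_eq_inter, mem_filter, mem_univ, true_and, card_filter,
    ← sum_add_distrib]
  refine sum_congr rfl fun x hx => ?_
  have : x ≠ u := by rintro rfl; exact hu hx
  have : x ≠ w := by rintro rfl; exact hw hx
  by_cases G.Adj u x <;> by_cases G.Adj w x <;> simp_all

theorem exists_inducedSize_add_eq_add {u w : V} (huw : u ≠ w) {k i j : ℕ}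
    (h : Realizable k #(exclusiveNeighbors G u w) #(exclusiveNeighbors G w u)
      #(nonDistinguishing G u w) i j) :
    ∃ S S' : Finset V, #S = k + 1 ∧ #S' = k + 1 ∧ inducedSize G S + j = inducedSize G S' + i := by
  have hdisj : Disjoint (exclusiveNeighbors G u w) (exclusiveNeighbors G w u) ∧
      Disjoint (exclusiveNeighbors G u w) (nonDistinguishing G u w) ∧
      Disjoint (exclusiveNeighbors G w u) (nonDistinguishing G u w) := by
    simp only [Finset.disjoint_left, exclusiveNeighbors, nonDistinguishing, mem_filter, mem_univ,
      true_and]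
    refine ⟨?_, ?_, ?_⟩ <;> tauto
  obtain ⟨T, hT, hk, hi, hj⟩ := exists_subset_card_inter_eq hdisj.1 hdisj.2.1 hdisj.2.2 h
  have hu : u ∉ T := fun hu => by
    simpa [exclusiveNeighbors, nonDistinguishing, huw] using hT hu
  have hw : w ∉ T := fun hw => by
    simpa [exclusiveNeighbors, nonDistinguishing, huw.symm] using hT hw
  refine ⟨insert u T, insert w T, by rw [card_insert_of_notMem hu, hk],
    by rw [card_insert_of_notMem hw, hk], ?_⟩
  have := card_filter_adj_add_card_inter_exclusiveNeighbors (G := G) hu hw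
  rw [inducedSize_insert hu, inducedSize_insert hw]
  omega

theorem areTwins_or_dominates_of_card_eq_zero {u w : V}
    (h : (#(exclusiveNeighbors G u w) = 0 ∧ #(exclusiveNeighbors G w u) = 0) ∨
      (#(exclusiveNeighbors G w u) = 0 ∧ #(nonDistinguishing G u w) = 0) ∨
      (#(exclusiveNeighbors G u w) = 0 ∧ #(nonDistinguishing G u w) = 0)) :
    AreTwins G u w ∨ Dominates G u w ∨ Dominates G w u := by
  simp only [card_eq_zero, filter_eq_empty_iff, exclusiveNeighbors, nonDistinguishing, mem_univ,
    true_imp_iff] at h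
  rcases h with ⟨hp, hq⟩ | ⟨hq, hz⟩ | ⟨hp, hz⟩
  · exact Or.inl fun x hxu hxw => by have := @hp x; have := @hq x; tauto
  · exact Or.inr (Or.inl fun x hxu hxw => by have := @hq x; have := @hz x; tauto)
  · exact Or.inr (Or.inr fun x hxw hxu => by have := @hp x; have := @hz x; tauto)

theorem degree_le_degree_add_card_exclusiveNeighbors (u w : V) :
    G.degree u ≤ G.degree w + #(exclusiveNeighbors G u w) + 1 := by
  have hsub : G.neighborFinset u ⊆ insert w (G.neighborFinset w ∪ exclusiveNeighbors G u w) := by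
    intro x hx
    rw [mem_neighborFinset] at hx
    by_cases hxw : x = w
    · exact hxw ▸ mem_insert_self _ _
    · refine mem_insert_of_mem (mem_union.mpr ?_)
      by_cases hwx : G.Adj w x
      · exact Or.inl ((mem_neighborFinset _ _ _).mpr hwx)
      · exact Or.inr (by simp [exclusiveNeighbors, hxw, hx, hwx])
  calc G.degree u ≤ #(insert w (G.neighborFinset w ∪ exclusiveNeighbors G u w)) :=
        card_le_card hsub
    _ ≤ G.degree w + #(exclusiveNeighbors G u w) + 1 :=
        (card_insert_le _ _).trans (Nat.succ_le_succ (card_union_le _ _))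

theorem degree_lt_three_or_card_lt_degree_add_three
    (hP : ∀ u w : V, u ≠ w → #(exclusiveNeighbors G u w) ≤ 1) (v : V) :
    G.degree v < 3 ∨ Fintype.card V < G.degree v + 3 := by
  by_contra! hdeg
  set N := G.neighborFinset v
  have hfar : 1 < #(insert v N)ᶜ := by
    rw [card_compl, card_insert_of_notMem (by simp [N])]
    have := hdeg.2
    simp only [N, card_neighborFinset_eq_degree]
    omega
  obtain ⟨p, hp, q, hq, hpq⟩ := one_lt_card.mp hfar
  simp only [mem_compl, mem_insert, not_or, N, mem_neighborFinset] at hp hq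
  have hmiss : ∀ r, r ≠ v → ¬G.Adj v r → #(N \ G.neighborFinset r) ≤ 1 := fun r hrv hvr =>
    (card_le_card fun x hx => by
      simp only [mem_sdiff, N, mem_neighborFinset] at hx
      have hxr : x ≠ r := by rintro rfl; exact hvr hx.1
      simp [exclusiveNeighbors, hx.1, hx.2, hxr]).trans (hP v r hrv.symm)
  have hsmall : #((N \ G.neighborFinset p) ∪ (N \ G.neighborFinset q)) < #N := by
    have := hmiss p hp.1 hp.2
    have := hmiss q hq.1 hq.2
    have := card_union_le (N \ G.neighborFinset p) (N \ G.neighborFinset q)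
    have : #N = G.degree v := card_neighborFinset_eq_degree G v
    omega
  obtain ⟨x, hxN, hx⟩ := exists_mem_notMem_of_card_lt_card hsmall
  simp only [mem_union, mem_sdiff, hxN, true_and, not_or, not_not, mem_neighborFinset] at hx
  have hxv : G.Adj v x := (mem_neighborFinset _ _ _).mp hxN
  have hpq_sub : {p, q} ⊆ exclusiveNeighbors G x v := by
    intro r hr
    rcases mem_insert.mp hr with rfl | hr
    · simp [exclusiveNeighbors, hp.1, hx.1.symm, hp.2]
    · rw [mem_singleton.mp hr]
      simp [exclusiveNeighbors, hq.1, hx.2.symm, hq.2]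
  have := card_le_card hpq_sub
  rw [card_pair hpq] at this
  have := hP x v hxv.ne'
  omega

theorem degree_le_one_or_degree_compl_le_one
    (hP : ∀ u w : V, u ≠ w → #(exclusiveNeighbors G u w) ≤ 1) (hn : 6 ≤ Fintype.card V) :
    (∀ v, G.degree v ≤ 1) ∨ ∀ v, Gᶜ.degree v ≤ 1 := by
  have hPc : ∀ u w : V, u ≠ w → #(exclusiveNeighbors Gᶜ u w) ≤ 1 := fun u w huw => by
    rw [exclusiveNeighbors_compl]
    exact hP w u huw.symm
  have hext : ∀ v, G.degree v ≤ 1 ∨ Fintype.card V ≤ G.degree v + 2 := fun v => by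
    have := degree_lt_three_or_card_lt_degree_add_three hP v
    have := degree_lt_three_or_card_lt_degree_add_three hPc v
    have := G.degree_lt_card_verts v
    rw [degree_compl] at *
    omega
  refine or_iff_not_imp_left.mpr fun h => ?_
  obtain ⟨v₀, hv₀⟩ := not_forall.mp h
  intro w
  have hclose : G.degree v₀ ≤ G.degree w + 2 := by
    rcases eq_or_ne v₀ w with rfl | hne
    · omega
    · have := degree_le_degree_add_card_exclusiveNeighbors (G := G) v₀ w
      have := hP v₀ w hne
      omega
  have := hext v₀
  have := hext w
  rw [degree_compl]
  omega

theorem inducedSize_insert_of_adj {v w : V} {U : Finset V} (hdeg : G.degree v ≤ 1) (hv : v ∉ U)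
    (hvw : G.Adj v w) (hw : w ∈ U) : inducedSize G (insert v U) = inducedSize G U + 1 := by
  rw [inducedSize_insert hv, card_eq_one.mpr ⟨w, ?_⟩]
  ext z
  simp only [mem_filter, mem_singleton]
  exact ⟨fun h => eq_of_adj_of_adj hdeg h.2 hvw, fun h => h ▸ ⟨hw, hvw⟩⟩

theorem inducedSize_insert_of_forall_not_adj {v : V} {U : Finset V} (hv : v ∉ U)
    (h : ∀ z ∈ U, ¬G.Adj v z) : inducedSize G (insert v U) = inducedSize G U := by
  rw [inducedSize_insert hv, filter_false_of_mem h, card_empty, add_zero]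

theorem exists_nonadjacent_pair_avoiding (hdeg : ∀ v : V, G.degree v ≤ 1) (X : Finset V) {m : ℕ}
    (hm : #X + m + 4 ≤ Fintype.card V) :
    ∃ r s : V, ∃ T : Finset V, #T = m ∧ Disjoint X (insert r (insert s T)) ∧ r ∉ insert s T ∧
      s ∉ T ∧ (∀ z ∈ insert s T, ¬G.Adj r z) ∧ ∀ z ∈ T, ¬G.Adj s z := by
  have hclosed : ∀ v, #(insert v (G.neighborFinset v)) ≤ 2 := fun v =>
    (card_insert_le _ _).trans (Nat.succ_le_succ (hdeg v))
  have hXc : #X + m + 4 ≤ #X + #Xᶜ := by rw [card_add_card_compl]; exact hm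
  obtain ⟨r, hr⟩ : Xᶜ.Nonempty := card_pos.mp (by omega)
  obtain ⟨s, hs⟩ : (Xᶜ \ insert r (G.neighborFinset r)).Nonempty := card_pos.mp (by
    have := le_card_sdiff (insert r (G.neighborFinset r)) Xᶜ
    have := hclosed r
    omega)
  obtain ⟨T, hT, rfl⟩ := exists_subset_card_eq (s := Xᶜ \ (insert r (G.neighborFinset r) ∪
    insert s (G.neighborFinset s))) (n := m) (by
      have := le_card_sdiff (insert r (G.neighborFinset r) ∪ insert s (G.neighborFinset s)) Xᶜ
      have := card_union_le (insert r (G.neighborFinset r)) (insert s (G.neighborFinset s))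
      have := hclosed r
      have := hclosed s
      omega)
  simp only [mem_sdiff, mem_compl, mem_insert, mem_neighborFinset, not_or] at hr hs
  have hT' : ∀ z ∈ T, z ∉ X ∧ z ≠ r ∧ ¬G.Adj r z ∧ z ≠ s ∧ ¬G.Adj s z := fun z hz => by
    simpa only [mem_sdiff, mem_compl, mem_union, mem_insert, mem_neighborFinset, not_or,
      and_assoc] using hT hz
  refine ⟨r, s, T, rfl, ?_, ?_, fun hs' => (hT' s hs').2.2.2.1 rfl, ?_,
    fun z hz => (hT' z hz).2.2.2.2⟩
  · simp only [disjoint_insert_right, hr, hs.1, not_false_eq_true, true_and]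
    exact Finset.disjoint_left.mpr fun z hzX hzT => (hT' z hzT).1 hzX
  · simp only [mem_insert, not_or]
    exact ⟨fun h => hs.2.1 h.symm, fun h => (hT' r h).2.1 rfl⟩
  · intro z hz
    rcases mem_insert.mp hz with rfl | hz
    · exact hs.2.2
    · exact (hT' z hz).2.2.1

theorem exists_inducedSize_eq_add_two (hdeg : ∀ v : V, G.degree v ≤ 1) {c : ℕ} (hc : 4 ≤ c)
    (hn : c + 4 ≤ Fintype.card V) {a b x y : V} (hab : G.Adj a b) (hxy : G.Adj x y)
    (hxa : x ≠ a) (hxb : x ≠ b) (hya : y ≠ a) (hyb : y ≠ b) :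
    ∃ S S' : Finset V, #S = c ∧ #S' = c ∧ inducedSize G S = inducedSize G S' + 2 := by
  obtain ⟨r, s, T, hT, hX, hr, hs, hrn, hsn⟩ := exists_nonadjacent_pair_avoiding hdeg
    {a, b, x, y} (m := c - 4) (by have := card_le_four (a := a) (b := b) (c := x) (d := y); omega)
  have hout : ∀ v ∈ ({a, b, x, y} : Finset V), v ≠ r ∧ v ≠ s ∧ v ∉ T := fun v hv => by
    simpa only [mem_insert, not_or] using Finset.disjoint_left.mp hX hv
  obtain ⟨har, has, haT⟩ := hout a (by simp)
  obtain ⟨hbr, hbs, hbT⟩ := hout b (by simp)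
  obtain ⟨hxr, hxs, hxT⟩ := hout x (by simp)
  obtain ⟨hyr, hys, hyT⟩ := hout y (by simp)
  have hpartner : ∀ v, v ≠ b → v ≠ y → ¬G.Adj v a ∧ ¬G.Adj v x := fun v hvb hvy =>
    ⟨fun h => hvb (eq_of_adj_of_adj (hdeg a) h.symm hab),
      fun h => hvy (eq_of_adj_of_adj (hdeg x) h.symm hxy)⟩
  -- `U + b + y` contains the edges `ab` and `xy`, while `r` and `s` add no edge to `U`.
  set U := insert a (insert x T)
  have hU : #U = c - 2 := by
    rw [card_insert_of_notMem (by simp [hxa.symm, haT]), card_insert_of_notMem hxT, hT]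
    omega
  have hyU : y ∉ U := by simp [U, hya, hxy.ne', hyT]
  have hbU : b ∉ insert y U := by simp [U, hyb.symm, hab.ne', hxb.symm, hbT]
  have hsU : s ∉ U := by simp [U, has.symm, hxs.symm, hs]
  have hrU : r ∉ insert s U := by
    simp only [U, mem_insert, not_or] at hr ⊢
    exact ⟨hr.1, har.symm, hxr.symm, hr.2⟩
  refine ⟨insert b (insert y U), insert r (insert s U), ?_, ?_, ?_⟩
  · rw [card_insert_of_notMem hbU, card_insert_of_notMem hyU, hU]; omega
  · rw [card_insert_of_notMem hrU, card_insert_of_notMem hsU, hU]; omega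
  rw [inducedSize_insert_of_adj (hdeg b) hbU hab.symm (by simp [U]),
    inducedSize_insert_of_adj (hdeg y) hyU hxy.symm (by simp [U]),
    inducedSize_insert_of_forall_not_adj hrU, inducedSize_insert_of_forall_not_adj hsU]
  · simp only [U, mem_insert, forall_eq_or_imp]
    exact ⟨(hpartner s hbs.symm hys.symm).1, (hpartner s hbs.symm hys.symm).2, hsn⟩
  · simp only [U, mem_insert, forall_eq_or_imp] at hrn ⊢
    exact ⟨hrn.1, (hpartner r hbr.symm hyr.symm).1, (hpartner r hbr.symm hyr.symm).2, hrn.2⟩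

theorem isSingleEdgeGraph_of_degree_le_one (hdeg : ∀ v : V, G.degree v ≤ 1) {c : ℕ} (hc : 4 ≤ c)
    (hn : c + 4 ≤ Fintype.card V)
    (hgap : ∀ S S' : Finset V, #S = c → #S' = c → inducedSize G S ≤ inducedSize G S' + 1)
    {a b : V} (hab : G.Adj a b) : IsSingleEdgeGraph G := by
  refine ⟨a, b, hab.ne, fun x y => ⟨fun hxy => ?_, ?_⟩⟩
  · by_contra hne
    have hxa : x ≠ a := fun h => hne (Or.inl ⟨h, eq_of_adj_of_adj (hdeg a) (h ▸ hxy) hab⟩)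
    have hxb : x ≠ b := fun h => hne (Or.inr ⟨h, eq_of_adj_of_adj (hdeg b) (h ▸ hxy) hab.symm⟩)
    have hya : y ≠ a := fun h =>
      hne (Or.inr ⟨eq_of_adj_of_adj (hdeg a) (h ▸ hxy.symm) hab, h⟩)
    have hyb : y ≠ b := fun h =>
      hne (Or.inl ⟨eq_of_adj_of_adj (hdeg b) (h ▸ hxy.symm) hab.symm, h⟩)
    obtain ⟨S, S', hS, hS', he⟩ :=
      exists_inducedSize_eq_add_two hdeg hc hn hab hxy hxa hxb hya hyb
    have := hgap S S' hS hS'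
    omega
  · rintro (⟨rfl, rfl⟩ | ⟨rfl, rfl⟩)
    exacts [hab, hab.symm]

theorem isSingleEdgeGraph_or_compl_of_gap_le_one {c : ℕ} (hc : 4 ≤ c)
    (hn : c + 4 ≤ Fintype.card V)
    (hgap : ∀ S S' : Finset V, #S = c → #S' = c → inducedSize G S ≤ inducedSize G S' + 1)
    {S₀ S₁ : Finset V} (hS₀ : #S₀ = c) (hS₁ : #S₁ = c)
    (hlt : inducedSize G S₀ < inducedSize G S₁) :
    IsSingleEdgeGraph G ∨ IsSingleEdgeGraph Gᶜ := by
  have hP : ∀ u w : V, u ≠ w → #(exclusiveNeighbors G u w) ≤ 1 := fun u w huw =>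
    le_one_of_forall_realizable (k := c - 1) (q := #(exclusiveNeighbors G w u))
      (z := #(nonDistinguishing G u w)) (by omega)
      (by have := card_exclusiveNeighbors_add_card_nonDistinguishing (G := G) huw; omega)
      fun i j hij => by
        obtain ⟨S, S', hS, hS', he⟩ := exists_inducedSize_add_eq_add huw hij
        have := hgap S S' (by omega) (by omega)
        have := hgap S' S (by omega) (by omega)
        omega
  have hsum : ∀ S : Finset V, #S = c → inducedSize G S + inducedSize Gᶜ S = c.choose 2 :=
    fun S hS => hS ▸ inducedSize_add_inducedSize_compl S
  rcases degree_le_one_or_degree_compl_le_one hP (by omega) with hdeg | hdeg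
  · obtain ⟨x, y, hxy⟩ := exists_adj_of_inducedSize_pos (by omega : 0 < inducedSize G S₁)
    exact Or.inl (isSingleEdgeGraph_of_degree_le_one hdeg hc hn hgap hxy)
  · obtain ⟨x, y, hxy⟩ := exists_adj_of_inducedSize_pos (S := S₀) (G := Gᶜ)
      (by have := hsum S₀ hS₀; have := hsum S₁ hS₁; omega)
    refine Or.inr (isSingleEdgeGraph_of_degree_le_one hdeg hc hn (fun S S' hS hS' => ?_) hxy)
    have := hgap S' S hS' hS
    have := hsum S hS
    have := hsum S' hS'
    omega

theorem isStarGraph_or_compl_of_gap_ge_two {c a b : ℕ} (hc : 4 ≤ c) (hn : c + 4 ≤ Fintype.card V)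
    (hab : a + 2 ≤ b) (hval : ∀ S : Finset V, #S = c → inducedSize G S = a ∨ inducedSize G S = b)
    {Sa Sb : Finset V} (hSa : #Sa = c) (hSb : #Sb = c) (ha : inducedSize G Sa = a)
    (hb : inducedSize G Sb = b) : IsStarGraph G ∨ IsStarGraph Gᶜ := by
  have hcl : ∀ u w : V, u ≠ w → AreTwins G u w ∨ Dominates G u w ∨ Dominates G w u :=
    fun u w huw => areTwins_or_dominates_of_card_eq_zero <|
      two_eq_zero_of_forall_realizable (k := c - 1) (d := b - a) (by omega) (by omega)
        (by have := card_exclusiveNeighbors_add_card_nonDistinguishing (G := G) huw; omega)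
        fun i j hij => by
          obtain ⟨S, S', hS, hS', he⟩ := exists_inducedSize_add_eq_add huw hij
          rcases hval S (by omega) with h | h <;> rcases hval S' (by omega) with h' | h' <;> omega
  by_cases hdom : ∃ u v, u ≠ v ∧ Dominates G u v
  · obtain ⟨u, v, huv, hd⟩ := hdom
    by_cases hadj : G.Adj u v
    · exact Or.inl (isStarGraph_of_dominates hcl hd hadj)
    · refine Or.inr (isStarGraph_of_dominates (fun u w huw => ?_) (dominates_compl.mpr hd)
        ((compl_adj G v u).mpr ⟨huv.symm, fun h => hadj h.symm⟩))
      rw [areTwins_compl, dominates_compl, dominates_compl]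
      exact (hcl u w huw).imp_right Or.symm
  · have htw : ∀ u w : V, u ≠ w → AreTwins G u w := fun u w huw => by
      rcases hcl u w huw with h | h | h
      · exact h
      · exact absurd ⟨u, w, huw, h⟩ hdom
      · exact absurd ⟨w, u, huw.symm, h⟩ hdom
    have hSa' := inducedSize_add_inducedSize_compl (G := G) Sa
    have hSb' := inducedSize_add_inducedSize_compl (G := G) Sb
    rcases eq_bot_or_compl_eq_bot htw with h | h
    · have := inducedSize_eq_zero_of_eq_bot h Sa
      have := inducedSize_eq_zero_of_eq_bot h Sb
      omega
    · have := inducedSize_eq_zero_of_eq_bot h Sa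
      have := inducedSize_eq_zero_of_eq_bot h Sb
      rw [hSa] at hSa'
      rw [hSb] at hSb'
      omega

theorem isStarGraph_or_isSingleEdgeGraph_of_two_sizes {c a b : ℕ} (hc : 4 ≤ c)
    (hn : c + 4 ≤ Fintype.card V) (hab : a < b)
    (hsizes : ∀ k, (∃ S : Finset V, #S = c ∧ inducedSize G S = k) ↔ k = a ∨ k = b) :
    IsStarGraph G ∨ IsSingleEdgeGraph G ∨ IsStarGraph Gᶜ ∨ IsSingleEdgeGraph Gᶜ := by
  have hval : ∀ S : Finset V, #S = c → inducedSize G S = a ∨ inducedSize G S = b :=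
    fun S hS => (hsizes _).mp ⟨S, hS, rfl⟩
  obtain ⟨Sa, hSa, ha⟩ := (hsizes a).mpr (Or.inl rfl)
  obtain ⟨Sb, hSb, hb⟩ := (hsizes b).mpr (Or.inr rfl)
  rcases Nat.lt_or_ge (a + 1) b with hgap | hgap
  · rcases isStarGraph_or_compl_of_gap_ge_two hc hn hgap hval hSa hSb ha hb with h | h <;> tauto
  · have hle : ∀ S S' : Finset V, #S = c → #S' = c → inducedSize G S ≤ inducedSize G S' + 1 :=
      fun S S' hS hS' => by
        rcases hval S hS with h | h <;> rcases hval S' hS' with h' | h' <;> omega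
    rcases isSingleEdgeGraph_or_compl_of_gap_le_one hc hn hle hSa hSb (by omega) with h | h <;>
      tauto

end SimpleGraph

/-- If `4 ≤ c ≤ n - 4` and the induced subgraphs of `G` of order `c` take exactly two
sizes, then `G` or its complement is a star or a single edge plus isolated vertices. -/
theorem stmt_16 {V : Type*} [Fintype V] [DecidableEq V] (G : SimpleGraph V)
    [DecidableRel G.Adj] (c : ℕ) (hc4 : 4 ≤ c) (hcn : c ≤ Fintype.card V - 4)
    (h : {k : ℕ | ∃ S : Finset V, S.card = c ∧ inducedSize G S = k}.ncard = 2) :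
    IsStarGraph G ∨ IsSingleEdgeGraph G ∨ IsStarGraph Gᶜ ∨ IsSingleEdgeGraph Gᶜ := by
  obtain ⟨x, y, hxy, hset⟩ := Set.ncard_eq_two.mp h
  have hsizes := fun k => Set.ext_iff.mp hset k
  rcases hxy.lt_or_gt with hlt | hlt
  · exact SimpleGraph.isStarGraph_or_isSingleEdgeGraph_of_two_sizes hc4 (by omega) hlt hsizes
  · exact SimpleGraph.isStarGraph_or_isSingleEdgeGraph_of_two_sizes hc4 (by omega) hlt
      fun k => (hsizes k).trans or_comm
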